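/- Suppose nonnegative continuous functions d_n on [0,T] satisfy d_{n+1}'(t) ≤ (−2L_0 + L) d_{n+1}(t) + L sup_{0≤s≤T} d_n(s), with d_{n+1}(0) = 0. Then sup_t d_{n+1}(t) ≤ (L/(2L_0 − L)) sup_t d_n(t) (if 2L_0 > L), so if additionally L/(2L_0 − L) < 1, the sequence sup_t d_n(t) converges to 0 geometrically; in particular d_n(t) = E|X_n(t) − X_{n+1}(t)|^2 shows the iterates X_n form a Cauchy sequence in sup-mean-square, yielding uniqueness of the equilibrium distribution curve in the strongly dissipative semi-linear case. -/

import Mathlib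

/-!
With `c = 2L₀ - L > 0` and `M = L sup d_n`, the hypothesis says `d_{n+1}' ≤ -c d_{n+1} + M`, whose
equilibrium is `M / c`. Since `d_{n+1}` starts at `0 ≤ M / c`, Grönwall's comparison keeps it below
that equilibrium on all of `[0, T]`, which is the contraction `sup d_{n+1} ≤ (L / c) sup d_n`.
Iterating gives the geometric bound, and the geometric sequence tends to `0` when `L / c < 1`.
-/

open Set Filter

theorem gronwallBound_div_neg_self {c : ℝ} (hc : c ≠ 0) (M x : ℝ) :
    gronwallBound (M / c) (-c) M x = M / c := by
  rw [gronwallBound_of_K_ne_0 (neg_ne_zero.mpr hc)]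
  field_simp
  ring

theorem le_div_of_deriv_le_neg_mul_add {f f' : ℝ → ℝ} {a b c M : ℝ} (hc : c ≠ 0)
    (hf : ContinuousOn f (Icc a b)) (hf' : ∀ x ∈ Ico a b, HasDerivWithinAt f (f' x) (Ici x) x)
    (ha : f a ≤ M / c) (bound : ∀ x ∈ Ico a b, f' x ≤ -c * f x + M) :
    ∀ x ∈ Icc a b, f x ≤ M / c := fun x hx => by
  simpa only [gronwallBound_div_neg_self hc] using
    le_gronwallBound_of_liminf_deriv_right_le hf
      (fun x hx _ hr => (hf' x hx).liminf_right_slope_le hr) ha bound x hx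

theorem Real.biSup_nonneg {X : Type*} {f : X → ℝ} {s : Set X} (hf : ∀ x ∈ s, 0 ≤ f x) :
    0 ≤ ⨆ x ∈ s, f x :=
  Real.iSup_nonneg fun x => Real.iSup_nonneg fun hx => hf x hx

theorem biSup_Icc_le_div_mul_biSup_of_deriv_le {a b c L : ℝ} {d e : ℝ → ℝ}
    (hc : 0 < c) (hL : 0 ≤ L) (he : ∀ t ∈ Icc a b, 0 ≤ e t)
    (hd : ∀ t ∈ Icc a b, DifferentiableAt ℝ d t) (hda : d a = 0)
    (hderiv : ∀ t ∈ Icc a b, deriv d t ≤ -c * d t + L * ⨆ s ∈ Icc a b, e s) :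
    ⨆ t ∈ Icc a b, d t ≤ L / c * ⨆ s ∈ Icc a b, e s := by
  set M := L * ⨆ s ∈ Icc a b, e s
  have hM : 0 ≤ M / c := div_nonneg (mul_nonneg hL (Real.biSup_nonneg he)) hc.le
  have hle : ∀ t ∈ Icc a b, d t ≤ M / c :=
    le_div_of_deriv_le_neg_mul_add hc.ne'
      (fun t ht => (hd t ht).continuousAt.continuousWithinAt)
      (fun t ht => (hd t (Ico_subset_Icc_self ht)).hasDerivAt.hasDerivWithinAt)
      (hda ▸ hM) (fun t ht => hderiv t (Ico_subset_Icc_self ht))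
  rw [← mul_div_right_comm]
  exact Real.iSup_le (fun t => Real.iSup_le (hle t) hM) hM

theorem stmt15_general (T L L₀ : ℝ) (hL : 0 < L) (h2L : L < 2 * L₀)
    (dn : ℕ → ℝ → ℝ)
    (hnn : ∀ n t, t ∈ Icc (0:ℝ) T → 0 ≤ dn n t)
    (hdiff : ∀ n t, t ∈ Icc (0:ℝ) T → DifferentiableAt ℝ (dn (n + 1)) t)
    (hrec : ∀ n, ∀ t ∈ Icc (0:ℝ) T,
      deriv (dn (n + 1)) t
        ≤ (-2 * L₀ + L) * dn (n + 1) t + L * ⨆ s ∈ Icc (0:ℝ) T, dn n s)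
    (h0 : ∀ n, dn (n + 1) 0 = 0) :
    (∀ n, (⨆ t ∈ Icc (0:ℝ) T, dn (n + 1) t)
        ≤ (L / (2 * L₀ - L)) * ⨆ t ∈ Icc (0:ℝ) T, dn n t) ∧
    (∀ n, (⨆ t ∈ Icc (0:ℝ) T, dn n t)
        ≤ (L / (2 * L₀ - L)) ^ n * ⨆ t ∈ Icc (0:ℝ) T, dn 0 t) ∧
    (L / (2 * L₀ - L) < 1 →
      Filter.Tendsto (fun n => ⨆ t ∈ Icc (0:ℝ) T, dn n t) Filter.atTop (nhds 0)) := by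
  have hc : 0 < 2 * L₀ - L := by linarith
  have hr : 0 ≤ L / (2 * L₀ - L) := div_nonneg hL.le hc.le
  have contraction : ∀ n, (⨆ t ∈ Icc (0:ℝ) T, dn (n + 1) t)
      ≤ (L / (2 * L₀ - L)) * ⨆ t ∈ Icc (0:ℝ) T, dn n t := fun n =>
    biSup_Icc_le_div_mul_biSup_of_deriv_le hc hL.le (hnn n) (hdiff n) (h0 n) fun t ht => by
      linarith [hrec n t ht]
  have geometric : ∀ n, (⨆ t ∈ Icc (0:ℝ) T, dn n t)
      ≤ (L / (2 * L₀ - L)) ^ n * ⨆ t ∈ Icc (0:ℝ) T, dn 0 t := fun n =>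
    le_geom (u := fun n => ⨆ t ∈ Icc (0:ℝ) T, dn n t) hr n fun k _ => contraction k
  refine ⟨contraction, geometric, fun hr1 => ?_⟩
  refine squeeze_zero (fun n => Real.biSup_nonneg (hnn n)) geometric ?_
  simpa using (tendsto_pow_atTop_nhds_zero_of_lt_one hr hr1).mul_const (⨆ t ∈ Icc (0:ℝ) T, dn 0 t)

/-- Contraction estimate for the successive-approximation differences in the strongly
dissipative semi-linear case: if nonnegative continuous `d_n` satisfy
`d_{n+1}' ≤ (−2L₀ + L) d_{n+1} + L sup d_n` with `d_{n+1}(0) = 0` and `2L₀ > L`, then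
`sup d_{n+1} ≤ (L/(2L₀−L)) sup d_n`; hence `sup d_n ≤ (L/(2L₀−L))ⁿ sup d_0`, and if
moreover `L/(2L₀−L) < 1` the suprema converge (geometrically) to `0`, so the iterates form
a Cauchy sequence in sup-mean-square, yielding uniqueness of the equilibrium curve. -/
theorem stmt15 (T L L₀ : ℝ) (hT : 0 < T) (hL : 0 < L) (h2L : L < 2 * L₀)
    (dn : ℕ → ℝ → ℝ)
    (hnn : ∀ n t, t ∈ Icc (0:ℝ) T → 0 ≤ dn n t)
    (hcont : ∀ n, ContinuousOn (dn n) (Icc 0 T))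
    (hdiff : ∀ n t, t ∈ Icc (0:ℝ) T → DifferentiableAt ℝ (dn (n + 1)) t)
    (hrec : ∀ n, ∀ t ∈ Icc (0:ℝ) T,
      deriv (dn (n + 1)) t
        ≤ (-2 * L₀ + L) * dn (n + 1) t + L * ⨆ s ∈ Icc (0:ℝ) T, dn n s)
    (h0 : ∀ n, dn (n + 1) 0 = 0) :
    (∀ n, (⨆ t ∈ Icc (0:ℝ) T, dn (n + 1) t)
        ≤ (L / (2 * L₀ - L)) * ⨆ t ∈ Icc (0:ℝ) T, dn n t) ∧
    (∀ n, (⨆ t ∈ Icc (0:ℝ) T, dn n t)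
        ≤ (L / (2 * L₀ - L)) ^ n * ⨆ t ∈ Icc (0:ℝ) T, dn 0 t) ∧
    (L / (2 * L₀ - L) < 1 →
      Filter.Tendsto (fun n => ⨆ t ∈ Icc (0:ℝ) T, dn n t) Filter.atTop (nhds 0)) :=
  stmt15_general T L L₀ hL h2L dn hnn hdiff hrec h0
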